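/- Let d ≥ 1, let f(x) = ∫_0^1 (4πs)^{-d/2} exp(-|x|²/(4s)) ds, and for T > 0 and a nonnegative Schwartz function φ on ℝ^d set φ̃_T(x) = T^{d/2} φ(T^{1/2} x). Then there exists a constant C > 0 (depending on φ but not on T) such that for all T ≥ 1 and all y ≠ 0, (f * φ̃_T)(y) ≤ f(y/2) ∫_{ℝ^d} φ(z) dz + C |y|^{-d}. -/

import Mathlib

open MeasureTheory

noncomputable def heatKernel (d : ℕ) (t : ℝ) (x : EuclideanSpace ℝ (Fin d)) : ℝ :=
  (4 * Real.pi * t) ^ (-(d : ℝ) / 2) * Real.exp (-‖x‖ ^ 2 / (4 * t))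

noncomputable def fOcc (d : ℕ) (x : EuclideanSpace ℝ (Fin d)) : ℝ :=
  ∫ s in (0 : ℝ)..1, heatKernel d s x

/-!
The heat kernel at each time is a radially decreasing probability density, so `f` is radially
decreasing with `∫ f = 1`. With `ψ_T(z) = T^{d/2} φ(T^{1/2} z)` and `M = C₀ (|y|/2)^{-d}`, where
`|x|^d |φ x| ≤ C₀`, one has pointwise `f(y - z) ψ_T(z) ≤ f(y/2) ψ_T(z) + M f(y - z)`: for
`|z| ≤ |y|/2` because `|y - z| ≥ |y|/2`, and otherwise because the decay of `φ` gives
`ψ_T(z) ≤ C₀ |z|^{-d} ≤ M` for every `T`. Integrating in `z`, with `∫ ψ_T = ∫ φ`, gives the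
bound with `C = 2^d C₀`.
-/

open Real Set Module

section Rescaling

variable {E : Type*} [NormedAddCommGroup E] [NormedSpace ℝ E]

theorem integral_pow_finrank_mul_comp_smul [FiniteDimensional ℝ E] [MeasurableSpace E]
    [BorelSpace E] (μ : Measure E) [μ.IsAddHaarMeasure] (g : E → ℝ) {R : ℝ} (hR : 0 < R) :
    ∫ z, R ^ finrank ℝ E * g (R • z) ∂μ = ∫ z, g z ∂μ := by
  rw [integral_const_mul, Measure.integral_comp_smul_of_nonneg μ g R (hR := hR.le), smul_eq_mul,
    mul_inv_cancel_left₀ (by positivity)]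

theorem pow_mul_comp_smul_le {g : E → ℝ} {n : ℕ} {C R r : ℝ}
    (hg : ∀ x, ‖x‖ ^ n * ‖g x‖ ≤ C) (hR : 0 < R) (hr : 0 < r) {z : E} (hz : r ≤ ‖z‖) :
    R ^ n * g (R • z) ≤ C / r ^ n := by
  have hC : 0 ≤ C := (by positivity : 0 ≤ ‖(0 : E)‖ ^ n * ‖g 0‖).trans (hg 0)
  have hz0 : 0 < ‖z‖ := hr.trans_le hz
  calc R ^ n * g (R • z) ≤ R ^ n * ‖g (R • z)‖ := by gcongr; exact le_norm_self _
    _ = ‖R • z‖ ^ n * ‖g (R • z)‖ / ‖z‖ ^ n := by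
        rw [norm_smul, norm_of_nonneg hR.le, mul_pow]; field_simp
    _ ≤ C / ‖z‖ ^ n := by gcongr; exact hg _
    _ ≤ C / r ^ n := by gcongr

end Rescaling

theorem mul_le_add_mul_of_le_or_le {a b c M : ℝ} (ha : 0 ≤ a) (hb : 0 ≤ b) (hc : 0 ≤ c)
    (hM : 0 ≤ M) (h : a ≤ c ∨ b ≤ M) : a * b ≤ c * b + M * a := by
  rcases h with h | h
  · nlinarith [mul_nonneg hM ha]
  · nlinarith [mul_nonneg hc hb]

section HeatKernel

variable {d : ℕ}

theorem heatKernel_nonneg {s : ℝ} (hs : 0 ≤ s) (x : EuclideanSpace ℝ (Fin d)) :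
    0 ≤ heatKernel d s x := by
  unfold heatKernel; positivity

theorem heatKernel_le_of_norm_le {s : ℝ} (hs : 0 ≤ s) {x x' : EuclideanSpace ℝ (Fin d)}
    (h : ‖x‖ ≤ ‖x'‖) : heatKernel d s x' ≤ heatKernel d s x := by
  unfold heatKernel
  gcongr

theorem measurable_heatKernel :
    Measurable (fun p : EuclideanSpace ℝ (Fin d) × ℝ => heatKernel d p.2 p.1) := by
  unfold heatKernel; fun_prop

theorem integral_heatKernel {s : ℝ} (hs : 0 < s) :
    ∫ x, heatKernel d s x = 1 := by
  have hexp : ∀ x : EuclideanSpace ℝ (Fin d),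
      -‖x‖ ^ 2 / (4 * s) = -(4 * s)⁻¹ * ‖x‖ ^ 2 := fun x => by ring
  simp_rw [heatKernel, hexp]
  rw [integral_const_mul, GaussianFourier.integral_rexp_neg_mul_sq_norm (by positivity),
    finrank_euclideanSpace_fin, div_inv_eq_mul, neg_div, rpow_neg (by positivity),
    show π * (4 * s) = 4 * π * s by ring]
  exact inv_mul_cancel₀ (by positivity)

theorem integrable_heatKernel {s : ℝ} (hs : 0 < s) :
    Integrable (fun x => heatKernel d s x) :=
  .of_integral_ne_zero (by rw [integral_heatKernel hs]; exact one_ne_zero)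

theorem heatKernel_le_of_le_one {x : EuclideanSpace ℝ (Fin d)} (hx : x ≠ 0) {s : ℝ} (hs : 0 < s)
    (hs1 : s ≤ 1) :
    heatKernel d s x ≤ (4 * π) ^ (-(d : ℝ) / 2) * (d.factorial * (4 / ‖x‖ ^ 2) ^ d) := by
  have ht : 0 < ‖x‖ ^ 2 / (4 * s) := by positivity
  -- `exp (-t) ≤ d! / t ^ d` turns the Gaussian factor into `s ^ d`, which beats `s ^ (-d/2)`.
  have hexp : exp (-‖x‖ ^ 2 / (4 * s)) ≤ d.factorial * (4 / ‖x‖ ^ 2) ^ d * s ^ d := by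
    calc exp (-‖x‖ ^ 2 / (4 * s)) ≤ ((‖x‖ ^ 2 / (4 * s)) ^ d / d.factorial)⁻¹ := by
          rw [neg_div, exp_neg]
          exact inv_anti₀ (by positivity) (pow_div_factorial_le_exp _ ht.le d)
      _ = d.factorial * (4 / ‖x‖ ^ 2) ^ d * s ^ d := by
          rw [inv_div, div_pow, div_pow, mul_pow]; field_simp
  have hs_pow : s ^ (-(d : ℝ) / 2) * s ^ d ≤ 1 := by
    rw [← rpow_natCast, ← rpow_add hs]
    exact rpow_le_one hs.le hs1 (by ring_nf; positivity)
  calc heatKernel d s x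
      ≤ (4 * π * s) ^ (-(d : ℝ) / 2) * (d.factorial * (4 / ‖x‖ ^ 2) ^ d * s ^ d) := by
        unfold heatKernel; gcongr
    _ = (4 * π) ^ (-(d : ℝ) / 2) * (d.factorial * (4 / ‖x‖ ^ 2) ^ d) *
          (s ^ (-(d : ℝ) / 2) * s ^ d) := by
        rw [mul_rpow (by positivity) hs.le]; ring
    _ ≤ (4 * π) ^ (-(d : ℝ) / 2) * (d.factorial * (4 / ‖x‖ ^ 2) ^ d) := by
        exact mul_le_of_le_one_right (by positivity) hs_pow

theorem intervalIntegrable_heatKernel {x : EuclideanSpace ℝ (Fin d)} (hx : x ≠ 0) :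
    IntervalIntegrable (fun s => heatKernel d s x) volume 0 1 := by
  rw [intervalIntegrable_iff_integrableOn_Ioc_of_le zero_le_one]
  refine Measure.integrableOn_of_bounded (M := (4 * π) ^ (-(d : ℝ) / 2) *
    (d.factorial * (4 / ‖x‖ ^ 2) ^ d)) measure_Ioc_lt_top.ne
    (measurable_heatKernel.comp measurable_prodMk_left).aestronglyMeasurable ?_
  filter_upwards [ae_restrict_mem measurableSet_Ioc] with s hs
  rw [norm_of_nonneg (heatKernel_nonneg hs.1.le x)]
  exact heatKernel_le_of_le_one hx hs.1 hs.2

theorem fOcc_nonneg (x : EuclideanSpace ℝ (Fin d)) : 0 ≤ fOcc d x :=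
  intervalIntegral.integral_nonneg zero_le_one fun _ hs => heatKernel_nonneg hs.1 x

theorem fOcc_le_of_norm_le {x x' : EuclideanSpace ℝ (Fin d)} (hx : x ≠ 0)
    (h : ‖x‖ ≤ ‖x'‖) : fOcc d x' ≤ fOcc d x := by
  have hx' : x' ≠ 0 := norm_pos_iff.1 ((norm_pos_iff.2 hx).trans_le h)
  exact intervalIntegral.integral_mono_on zero_le_one (intervalIntegrable_heatKernel hx')
    (intervalIntegrable_heatKernel hx) fun s hs => heatKernel_le_of_norm_le hs.1 h

theorem fOcc_sub_le_fOcc_half {y z : EuclideanSpace ℝ (Fin d)} (hy : y ≠ 0)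
    (hz : ‖z‖ ≤ ‖y‖ / 2) : fOcc d (y - z) ≤ fOcc d ((2 : ℝ)⁻¹ • y) := by
  refine fOcc_le_of_norm_le (smul_ne_zero (by norm_num) hy) ?_
  rw [norm_smul, norm_inv, Real.norm_two]
  linarith [norm_sub_norm_le y z]

theorem integrable_heatKernel_prod :
    Integrable (fun p : EuclideanSpace ℝ (Fin d) × ℝ => heatKernel d p.2 p.1)
      (volume.prod (volume.restrict (Ioc 0 1))) := by
  rw [integrable_prod_iff' measurable_heatKernel.aestronglyMeasurable]
  have hIoc : ∀ᵐ s ∂volume.restrict (Ioc (0 : ℝ) 1), 0 < s :=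
    ae_restrict_of_forall_mem measurableSet_Ioc fun s hs => hs.1
  refine ⟨hIoc.mono fun s hs => integrable_heatKernel hs, (integrable_const 1).congr ?_⟩
  filter_upwards [hIoc] with s hs
  simp_rw [norm_of_nonneg (heatKernel_nonneg hs.le _), integral_heatKernel hs]

theorem fOcc_eq_integral_Ioc (x : EuclideanSpace ℝ (Fin d)) :
    fOcc d x = ∫ s in Ioc 0 1, heatKernel d s x :=
  intervalIntegral.integral_of_le zero_le_one

theorem integrable_fOcc : Integrable (fOcc d) :=
  integrable_heatKernel_prod.integral_prod_left.congr
    (ae_of_all _ fun x => (fOcc_eq_integral_Ioc x).symm)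

theorem integral_fOcc : ∫ x, fOcc d x = 1 := by
  simp_rw [fOcc_eq_integral_Ioc]
  rw [integral_integral_swap integrable_heatKernel_prod,
    setIntegral_congr_fun measurableSet_Ioc fun s hs => integral_heatKernel hs.1]
  simp

end HeatKernel

theorem stmt19_general (d : ℕ)
    (φ : SchwartzMap (EuclideanSpace ℝ (Fin d)) ℝ) (hφ : ∀ x, 0 ≤ φ x) :
    ∃ C > 0, ∀ T : ℝ, 1 ≤ T → ∀ y : EuclideanSpace ℝ (Fin d), y ≠ 0 →
      (∫ z : EuclideanSpace ℝ (Fin d),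
          fOcc d (y - z) * (T ^ ((d : ℝ) / 2) * φ ((T ^ ((1 : ℝ) / 2)) • z)))
        ≤ fOcc d ((2 : ℝ)⁻¹ • y) * (∫ z : EuclideanSpace ℝ (Fin d), φ z) +
          C * ‖y‖ ^ (-(d : ℝ)) := by
  obtain ⟨C₀, hC₀, hdecay⟩ := φ.decay d 0
  simp only [norm_iteratedFDeriv_zero] at hdecay
  refine ⟨2 ^ d * C₀, by positivity, fun T hT y hy => ?_⟩
  set R := T ^ ((1 : ℝ) / 2)
  have hR : 0 < R := by positivity
  have hTR : T ^ ((d : ℝ) / 2) = R ^ d := by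
    rw [← rpow_natCast, ← rpow_mul (by positivity)]; ring_nf
  set ψ := fun z => R ^ d * φ (R • z)
  have hψ0 (z) : 0 ≤ ψ z := mul_nonneg (by positivity) (hφ _)
  have hψ : ∫ z, ψ z = ∫ z, φ z := by
    simpa using integral_pow_finrank_mul_comp_smul volume φ hR
  set M := C₀ / (‖y‖ / 2) ^ d
  have hsplit (z) : fOcc d (y - z) * ψ z ≤ fOcc d ((2 : ℝ)⁻¹ • y) * ψ z + M * fOcc d (y - z) := by
    refine mul_le_add_mul_of_le_or_le (fOcc_nonneg _) (hψ0 z) (fOcc_nonneg _) (by positivity) ?_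
    rcases le_or_gt ‖z‖ (‖y‖ / 2) with hz | hz
    · exact .inl (fOcc_sub_le_fOcc_half hy hz)
    · exact .inr (pow_mul_comp_smul_le hdecay hR (by positivity) hz.le)
  have hψint : Integrable ψ :=
    ((integrable_comp_smul_iff volume φ hR.ne').2 φ.integrable).const_mul _
  have hfy : Integrable fun z => fOcc d (y - z) := integrable_fOcc.comp_sub_left y
  simp_rw [hTR]
  calc ∫ z, fOcc d (y - z) * ψ z
      ≤ ∫ z, (fOcc d ((2 : ℝ)⁻¹ • y) * ψ z + M * fOcc d (y - z)) :=
        integral_mono_of_nonneg (ae_of_all _ fun z => mul_nonneg (fOcc_nonneg _) (hψ0 z))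
          ((hψint.const_mul _).add (hfy.const_mul _)) (ae_of_all _ hsplit)
    _ = fOcc d ((2 : ℝ)⁻¹ • y) * (∫ z, φ z) + M := by
        rw [integral_add (hψint.const_mul _) (hfy.const_mul _), integral_const_mul (fOcc d _), hψ,
          integral_const_mul M, integral_sub_left_eq_self, integral_fOcc, mul_one]
    _ = fOcc d ((2 : ℝ)⁻¹ • y) * (∫ z, φ z) + 2 ^ d * C₀ * ‖y‖ ^ (-(d : ℝ)) := by
        rw [rpow_neg (norm_nonneg y), rpow_natCast]
        simp only [M, div_pow]
        field_simp

theorem stmt19 (d : ℕ) (hd : 1 ≤ d)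
    (φ : SchwartzMap (EuclideanSpace ℝ (Fin d)) ℝ) (hφ : ∀ x, 0 ≤ φ x) :
    ∃ C > 0, ∀ T : ℝ, 1 ≤ T → ∀ y : EuclideanSpace ℝ (Fin d), y ≠ 0 →
      (∫ z : EuclideanSpace ℝ (Fin d),
          fOcc d (y - z) * (T ^ ((d : ℝ) / 2) * φ ((T ^ ((1 : ℝ) / 2)) • z)))
        ≤ fOcc d ((2 : ℝ)⁻¹ • y) * (∫ z : EuclideanSpace ℝ (Fin d), φ z) +
          C * ‖y‖ ^ (-(d : ℝ)) :=
  stmt19_general d φ hφ
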